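/- Let |φ⟩ = Σ a_{ijk}|ijk⟩ be a unit vector in ℂ^{d1}⊗ℂ^{d2}⊗ℂ^{d3} with d1, d2, d3 ≥ 2. Then C_3²(|φ⟩) ≥ (1/((d1−1)(d2−1)(d3−1))) · Σ C_3²(|φ⟩_{2⊗2⊗2}), where the sum runs over all (d1 choose 2)(d2 choose 2)(d3 choose 2) choices of index pairs i_1<i_2, j_1<j_2, k_1<k_2, |φ⟩_{2⊗2⊗2} = Σ_{i∈{i_1,i_2}, j∈{j_1,j_2}, k∈{k_1,k_2}} a_{ijk}|ijk⟩ is the corresponding unnormalized three-qubit substate, and C_3² of an unnormalized three-qubit vector is given by the homogeneous coefficient formula C_3²(ψ) = (1/2) Σ ( |b_{ijk}b_{pqt} − b_{ijt}b_{pqk}|² + |b_{ijk}b_{pqt} − b_{iqk}b_{pjt}|² + |b_{ijk}b_{pqt} − b_{pjk}b_{iqt}|² ) over its coefficients b. -/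

import Mathlib

open scoped BigOperators

namespace Stmt6

/-- The (unnormalized) projector `|v⟩⟨v|` associated to a vector `v`. -/
noncomputable def outer {I : Type*} (v : I → ℂ) : Matrix I I ℂ :=
  Matrix.of fun x y => v x * (starRingEnd ℂ) (v y)

variable {d1 d2 d3 : ℕ}

/-- `tr(ρ_α²)` for `α = {1}`. -/
noncomputable def tr1sq (ρ : Matrix (Fin d1 × Fin d2 × Fin d3) (Fin d1 × Fin d2 × Fin d3) ℂ) : ℂ :=
  ∑ i, ∑ p, (∑ j, ∑ k, ρ (i, j, k) (p, j, k)) * (∑ j, ∑ k, ρ (p, j, k) (i, j, k))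

/-- `tr(ρ_α²)` for `α = {2}`. -/
noncomputable def tr2sq (ρ : Matrix (Fin d1 × Fin d2 × Fin d3) (Fin d1 × Fin d2 × Fin d3) ℂ) : ℂ :=
  ∑ j, ∑ q, (∑ i, ∑ k, ρ (i, j, k) (i, q, k)) * (∑ i, ∑ k, ρ (i, q, k) (i, j, k))

/-- `tr(ρ_α²)` for `α = {3}`. -/
noncomputable def tr3sq (ρ : Matrix (Fin d1 × Fin d2 × Fin d3) (Fin d1 × Fin d2 × Fin d3) ℂ) : ℂ :=
  ∑ k, ∑ t, (∑ i, ∑ j, ρ (i, j, k) (i, j, t)) * (∑ i, ∑ j, ρ (i, j, t) (i, j, k))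

/-- `tr(ρ_α²)` for `α = {1,2}`. -/
noncomputable def tr12sq (ρ : Matrix (Fin d1 × Fin d2 × Fin d3) (Fin d1 × Fin d2 × Fin d3) ℂ) : ℂ :=
  ∑ i, ∑ p, ∑ j, ∑ q, (∑ k, ρ (i, j, k) (p, q, k)) * (∑ k, ρ (p, q, k) (i, j, k))

/-- `tr(ρ_α²)` for `α = {1,3}`. -/
noncomputable def tr13sq (ρ : Matrix (Fin d1 × Fin d2 × Fin d3) (Fin d1 × Fin d2 × Fin d3) ℂ) : ℂ :=
  ∑ i, ∑ p, ∑ k, ∑ t, (∑ j, ρ (i, j, k) (p, j, t)) * (∑ j, ρ (p, j, t) (i, j, k))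

/-- `tr(ρ_α²)` for `α = {2,3}`. -/
noncomputable def tr23sq (ρ : Matrix (Fin d1 × Fin d2 × Fin d3) (Fin d1 × Fin d2 × Fin d3) ℂ) : ℂ :=
  ∑ j, ∑ q, ∑ k, ∑ t, (∑ i, ρ (i, j, k) (i, q, t)) * (∑ i, ρ (i, q, t) (i, j, k))

/-- Tripartite pure-state concurrence
`C₃(|φ⟩) = 2^{1−3/2} √((2³−2) − Σ_α tr(ρ_α²))`, where `α` runs over the six
nonempty proper subsets of `{1,2,3}`. -/
noncomputable def pureC3 (φ : Fin d1 × Fin d2 × Fin d3 → ℂ) : ℝ :=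
  (2 : ℝ) ^ ((1 : ℝ) - (3 : ℝ) / 2) *
    Real.sqrt (((2 : ℝ) ^ (3 : ℕ) - 2) -
      (tr1sq (outer φ) + tr2sq (outer φ) + tr3sq (outer φ) +
        tr12sq (outer φ) + tr13sq (outer φ) + tr23sq (outer φ)).re)


/-- Squared concurrence of a (possibly unnormalized) three-qubit vector,
given by the homogeneous coefficient formula. -/
noncomputable def C3sqCoeff (b : Fin 2 × Fin 2 × Fin 2 → ℂ) : ℝ :=
  (1 / 2) * ∑ i, ∑ p, ∑ j, ∑ q, ∑ k, ∑ t,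
    (‖b (i, j, k) * b (p, q, t) - b (i, j, t) * b (p, q, k)‖ ^ 2 +
     ‖b (i, j, k) * b (p, q, t) - b (i, q, k) * b (p, j, t)‖ ^ 2 +
     ‖b (i, j, k) * b (p, q, t) - b (p, j, k) * b (i, q, t)‖ ^ 2)

/-- The (unnormalized) three-qubit substate of `a` determined by the index
pairs `i₁,i₂`, `j₁,j₂`, `k₁,k₂`. -/
noncomputable def subvec (a : Fin d1 × Fin d2 × Fin d3 → ℂ)
    (i₁ i₂ : Fin d1) (j₁ j₂ : Fin d2) (k₁ k₂ : Fin d3) : Fin 2 × Fin 2 × Fin 2 → ℂ :=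
  fun x => a (if x.1 = 0 then i₁ else i₂,
              if x.2.1 = 0 then j₁ else j₂,
              if x.2.2 = 0 then k₁ else k₂)

/-!
For a unit vector the purities expand into coefficient sums: `tr ρ_α² = tr ρ_ᾱ²`, and
`C₃²(φ) = ½ Σ T(i,p,j,q,k,t)` with `T ≥ 0` the bracket of the coefficient formula (`pureC3_sq`).
Restricting one party to a pair `c₁ < c₂` keeps exactly the terms whose two indices in that party
lie in `{c₁, c₂}`; summed over all pairs, a diagonal term (`i = p`) is counted `d − 1` times and an
off-diagonal one once, so restricting one party to pairs costs at most a factor `d − 1`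
(`sum_pairs_le`). As `C₃²` is symmetric under permuting the parties, this applies to each party in
turn.
-/

open Finset ComplexConjugate

section Pairs

variable {α : Type*} [Fintype α] [LinearOrder α]

theorem sum_sum_lt_add_swap {M : Type*} [AddCommMonoid M] (h : α → α → M) :
    ∑ c₁, ∑ c₂ with c₁ < c₂, (h c₁ c₂ + h c₂ c₁) = ∑ c₁, ∑ c₂ with c₁ ≠ c₂, h c₁ c₂ := by
  have hswap : ∑ c₁, ∑ c₂ with c₁ < c₂, h c₂ c₁ = ∑ c₁, ∑ c₂ with c₂ < c₁, h c₁ c₂ := by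
    simp only [sum_filter]
    exact sum_comm
  simp only [sum_add_distrib]
  rw [hswap, ← sum_add_distrib]
  refine sum_congr rfl fun c₁ _ => ?_
  rw [← sum_union (disjoint_filter.2 fun _ _ h₁ h₂ => lt_asymm h₁ h₂)]
  congr 1
  ext c₂
  simp only [mem_union, mem_filter, mem_univ, true_and]
  exact lt_or_lt_iff_ne

theorem sum_filter_ne_add_le (hα : 2 ≤ Fintype.card α) (g : α → α → ℝ) (hg : ∀ i p, 0 ≤ g i p)
    (c : α) :
    ∑ c₂ with c ≠ c₂, (g c c + g c c₂) ≤ ((Fintype.card α : ℝ) - 1) * ∑ p, g c p := by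
  have hcard : ((#({c₂ | c ≠ c₂} : Finset α) : ℕ) : ℝ) = (Fintype.card α : ℝ) - 1 := by
    rw [filter_ne, card_erase_of_mem (mem_univ c), card_univ,
      Nat.cast_sub (Fintype.card_pos_iff.2 ⟨c⟩), Nat.cast_one]
  have hone : (1 : ℝ) ≤ (Fintype.card α : ℝ) - 1 := by
    have : (2 : ℝ) ≤ Fintype.card α := by exact_mod_cast hα
    linarith
  calc ∑ c₂ with c ≠ c₂, (g c c + g c c₂)
      = ((Fintype.card α : ℝ) - 1) * g c c + ∑ c₂ with c ≠ c₂, g c c₂ := by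
        rw [sum_add_distrib, sum_const, nsmul_eq_mul, hcard]
    _ ≤ ((Fintype.card α : ℝ) - 1) * g c c +
          ((Fintype.card α : ℝ) - 1) * ∑ c₂ with c ≠ c₂, g c c₂ := by
        gcongr
        exact le_mul_of_one_le_left (sum_nonneg fun _ _ => hg _ _) hone
    _ = ((Fintype.card α : ℝ) - 1) * ∑ p, g c p := by
        rw [← mul_add, filter_ne, add_sum_erase _ _ (mem_univ c)]

theorem sum_pairs_le (hα : 2 ≤ Fintype.card α) (g : α → α → ℝ) (hg : ∀ i p, 0 ≤ g i p) :
    ∑ c₁, ∑ c₂ with c₁ < c₂, ∑ y, ∑ z, g (![c₁, c₂] y) (![c₁, c₂] z) ≤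
      ((Fintype.card α : ℝ) - 1) * ∑ i, ∑ p, g i p := by
  calc ∑ c₁, ∑ c₂ with c₁ < c₂, ∑ y, ∑ z, g (![c₁, c₂] y) (![c₁, c₂] z)
      = ∑ c₁, ∑ c₂ with c₁ < c₂, ((g c₁ c₁ + g c₁ c₂) + (g c₂ c₂ + g c₂ c₁)) := by
        simp only [Fin.sum_univ_two, Matrix.cons_val_zero, Matrix.cons_val_one]
        exact sum_congr rfl fun _ _ => sum_congr rfl fun _ _ => by ring
    _ = ∑ c₁, ∑ c₂ with c₁ ≠ c₂, (g c₁ c₁ + g c₁ c₂) := sum_sum_lt_add_swap _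
    _ ≤ ∑ c₁, ((Fintype.card α : ℝ) - 1) * ∑ p, g c₁ p :=
        sum_le_sum fun c _ => sum_filter_ne_add_le hα g hg c
    _ = ((Fintype.card α : ℝ) - 1) * ∑ i, ∑ p, g i p := by rw [mul_sum]

end Pairs

section Homogeneous

variable {α β γ : Type*}

noncomputable def c3sqTerm (b : α × β × γ → ℂ) (i p : α) (j q : β) (k t : γ) : ℝ :=
  ‖b (i, j, k) * b (p, q, t) - b (i, j, t) * b (p, q, k)‖ ^ 2 +
    ‖b (i, j, k) * b (p, q, t) - b (i, q, k) * b (p, j, t)‖ ^ 2 +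
    ‖b (i, j, k) * b (p, q, t) - b (p, j, k) * b (i, q, t)‖ ^ 2

theorem c3sqTerm_nonneg (b : α × β × γ → ℂ) (i p : α) (j q : β) (k t : γ) :
    0 ≤ c3sqTerm b i p j q k t := by
  unfold c3sqTerm
  positivity

theorem c3sqTerm_eq (b : α × β × γ → ℂ) (i p : α) (j q : β) (k t : γ) :
    c3sqTerm b i p j q k t =
      3 * (Complex.normSq (b (i, j, k)) * Complex.normSq (b (p, q, t))) +
        Complex.normSq (b (i, j, t)) * Complex.normSq (b (p, q, k)) +
        Complex.normSq (b (i, q, k)) * Complex.normSq (b (p, j, t)) +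
        Complex.normSq (b (p, j, k)) * Complex.normSq (b (i, q, t)) -
        2 * (b (i, j, k) * b (p, q, t) * conj (b (i, j, t) * b (p, q, k)) +
          b (i, j, k) * b (p, q, t) * conj (b (i, q, k) * b (p, j, t)) +
          b (i, j, k) * b (p, q, t) * conj (b (p, j, k) * b (i, q, t))).re := by
  simp only [c3sqTerm, Complex.sq_norm, Complex.normSq_sub, Complex.normSq_mul, Complex.add_re]
  ring

variable [Fintype α] [Fintype β] [Fintype γ]

noncomputable def c3sq (b : α × β × γ → ℂ) : ℝ :=
  1 / 2 * ∑ i, ∑ p, ∑ j, ∑ q, ∑ k, ∑ t, c3sqTerm b i p j q k t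

theorem c3sq_nonneg (b : α × β × γ → ℂ) : 0 ≤ c3sq b :=
  mul_nonneg (by norm_num) <| sum_nonneg fun _ _ => sum_nonneg fun _ _ => sum_nonneg fun _ _ =>
    sum_nonneg fun _ _ => sum_nonneg fun _ _ => sum_nonneg fun _ _ => c3sqTerm_nonneg _ _ _ _ _ _ _

theorem sum_c3sqTerm (b : α × β × γ → ℂ) (hb : ∑ x, Complex.normSq (b x) = 1) :
    ∑ i, ∑ p, ∑ j, ∑ q, ∑ k, ∑ t, c3sqTerm b i p j q k t =
      6 - 2 * ∑ i, ∑ p, ∑ j, ∑ q, ∑ k, ∑ t,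
        (b (i, j, k) * b (p, q, t) * conj (b (i, j, t) * b (p, q, k)) +
          b (i, j, k) * b (p, q, t) * conj (b (i, q, k) * b (p, j, t)) +
          b (i, j, k) * b (p, q, t) * conj (b (p, j, k) * b (i, q, t))).re := by
  simp only [Fintype.sum_prod_type] at hb
  have h₀ : ∑ i, ∑ p, ∑ j, ∑ q, ∑ k, ∑ t,
      3 * (Complex.normSq (b (i, j, k)) * Complex.normSq (b (p, q, t))) = 3 := by
    simp only [← mul_sum, ← sum_mul, hb, mul_one]
  have h₁ : ∑ i, ∑ p, ∑ j, ∑ q, ∑ k, ∑ t,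
      Complex.normSq (b (i, j, t)) * Complex.normSq (b (p, q, k)) = 1 := by
    simp only [← mul_sum, ← sum_mul, hb, mul_one]
  have h₂ : ∑ i, ∑ p, ∑ j, ∑ q, ∑ k, ∑ t,
      Complex.normSq (b (i, q, k)) * Complex.normSq (b (p, j, t)) = 1 := by
    simp only [← mul_sum, ← sum_mul, hb, mul_one]
  have h₃ : ∑ i, ∑ p, ∑ j, ∑ q, ∑ k, ∑ t,
      Complex.normSq (b (p, j, k)) * Complex.normSq (b (i, q, t)) = 1 := by
    simp only [← mul_sum, ← sum_mul, hb, mul_one]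
  simp only [c3sqTerm_eq, sum_sub_distrib, sum_add_distrib, h₀, h₁, h₂, h₃, mul_sum]
  norm_num

theorem c3sq_comp_swap₁₂ (b : α × β × γ → ℂ) :
    c3sq (b ∘ fun x : β × α × γ => (x.2.1, x.1, x.2.2)) = c3sq b := by
  have h : ∀ j q i p k t, c3sqTerm (b ∘ fun x : β × α × γ => (x.2.1, x.1, x.2.2)) j q i p k t =
      c3sqTerm b i p j q k t := fun _ _ _ _ _ _ => by
    simp only [c3sqTerm, Function.comp_apply]
    ring
  simp only [c3sq, h, sum_comm (s := (univ : Finset β)) (t := (univ : Finset α))]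

theorem c3sq_comp_swap₂₃ (b : α × β × γ → ℂ) :
    c3sq (b ∘ fun x : α × γ × β => (x.1, x.2.2, x.2.1)) = c3sq b := by
  have h : ∀ i p k t j q, c3sqTerm (b ∘ fun x : α × γ × β => (x.1, x.2.2, x.2.1)) i p k t j q =
      c3sqTerm b i p j q k t := fun _ _ _ _ _ _ => by
    simp only [c3sqTerm, Function.comp_apply]
    ring
  simp only [c3sq, h, sum_comm (s := (univ : Finset γ)) (t := (univ : Finset β))]

theorem sum_pairs_c3sq_comp_fst_le [LinearOrder α] (hα : 2 ≤ Fintype.card α)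
    (b : α × β × γ → ℂ) :
    ∑ c₁, ∑ c₂ with c₁ < c₂, c3sq (b ∘ Prod.map ![c₁, c₂] id) ≤
      ((Fintype.card α : ℝ) - 1) * c3sq b := by
  have h := sum_pairs_le hα (fun i p => ∑ j, ∑ q, ∑ k, ∑ t, c3sqTerm b i p j q k t)
    fun _ _ => sum_nonneg fun _ _ => sum_nonneg fun _ _ => sum_nonneg fun _ _ =>
      sum_nonneg fun _ _ => c3sqTerm_nonneg _ _ _ _ _ _ _
  calc ∑ c₁, ∑ c₂ with c₁ < c₂, c3sq (b ∘ Prod.map ![c₁, c₂] id)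
      = 1 / 2 * ∑ c₁, ∑ c₂ with c₁ < c₂, ∑ y, ∑ z,
          ∑ j, ∑ q, ∑ k, ∑ t, c3sqTerm b (![c₁, c₂] y) (![c₁, c₂] z) j q k t := by
        rw [mul_sum]
        exact sum_congr rfl fun _ _ => by rw [mul_sum]; rfl
    _ ≤ 1 / 2 * (((Fintype.card α : ℝ) - 1) *
          ∑ i, ∑ p, ∑ j, ∑ q, ∑ k, ∑ t, c3sqTerm b i p j q k t) :=
        mul_le_mul_of_nonneg_left h (by norm_num)
    _ = ((Fintype.card α : ℝ) - 1) * c3sq b := by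
        rw [c3sq]
        ring

theorem sum_pairs_c3sq_comp_snd_le [LinearOrder β] (hβ : 2 ≤ Fintype.card β)
    (b : α × β × γ → ℂ) :
    ∑ c₁, ∑ c₂ with c₁ < c₂, c3sq (b ∘ Prod.map id (Prod.map ![c₁, c₂] id)) ≤
      ((Fintype.card β : ℝ) - 1) * c3sq b := by
  have h := sum_pairs_c3sq_comp_fst_le hβ (b ∘ fun x : β × α × γ => (x.2.1, x.1, x.2.2))
  rw [c3sq_comp_swap₁₂] at h
  convert h using 4 with c₁ _ c₂ _
  exact (c3sq_comp_swap₁₂ _).symm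

theorem sum_pairs_c3sq_comp_thd_le [LinearOrder γ] (hγ : 2 ≤ Fintype.card γ)
    (b : α × β × γ → ℂ) :
    ∑ c₁, ∑ c₂ with c₁ < c₂, c3sq (b ∘ Prod.map id (Prod.map id ![c₁, c₂])) ≤
      ((Fintype.card γ : ℝ) - 1) * c3sq b := by
  have h := sum_pairs_c3sq_comp_snd_le hγ (b ∘ fun x : α × γ × β => (x.1, x.2.2, x.2.1))
  rw [c3sq_comp_swap₂₃] at h
  convert h using 4 with c₁ _ c₂ _
  exact (c3sq_comp_swap₂₃ _).symm

theorem sum_substates_c3sq_le [LinearOrder α] [LinearOrder β] [LinearOrder γ]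
    (hα : 2 ≤ Fintype.card α) (hβ : 2 ≤ Fintype.card β) (hγ : 2 ≤ Fintype.card γ)
    (b : α × β × γ → ℂ) :
    ∑ i₁, ∑ i₂ with i₁ < i₂, ∑ j₁, ∑ j₂ with j₁ < j₂, ∑ k₁, ∑ k₂ with k₁ < k₂,
        c3sq (b ∘ Prod.map ![i₁, i₂] (Prod.map ![j₁, j₂] ![k₁, k₂])) ≤
      ((Fintype.card α : ℝ) - 1) * ((Fintype.card β : ℝ) - 1) * ((Fintype.card γ : ℝ) - 1) *
        c3sq b := by
  have hβ' : (0 : ℝ) ≤ (Fintype.card β : ℝ) - 1 :=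
    sub_nonneg.2 (by exact_mod_cast (by omega : 1 ≤ Fintype.card β))
  have hγ' : (0 : ℝ) ≤ (Fintype.card γ : ℝ) - 1 :=
    sub_nonneg.2 (by exact_mod_cast (by omega : 1 ≤ Fintype.card γ))
  calc _ ≤ ∑ i₁, ∑ i₂ with i₁ < i₂, ∑ j₁, ∑ j₂ with j₁ < j₂,
          ((Fintype.card γ : ℝ) - 1) * c3sq (b ∘ Prod.map ![i₁, i₂] (Prod.map ![j₁, j₂] id)) := by
        gcongr with i₁ _ i₂ _ j₁ _ j₂ _
        exact sum_pairs_c3sq_comp_thd_le hγ (b ∘ Prod.map ![i₁, i₂] (Prod.map ![j₁, j₂] id))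
    _ = ((Fintype.card γ : ℝ) - 1) * ∑ i₁, ∑ i₂ with i₁ < i₂, ∑ j₁, ∑ j₂ with j₁ < j₂,
          c3sq (b ∘ Prod.map ![i₁, i₂] (Prod.map ![j₁, j₂] id)) := by
        simp only [mul_sum]
    _ ≤ ((Fintype.card γ : ℝ) - 1) * ∑ i₁, ∑ i₂ with i₁ < i₂,
          ((Fintype.card β : ℝ) - 1) * c3sq (b ∘ Prod.map ![i₁, i₂] id) := by
        gcongr with i₁ _ i₂ _
        exact sum_pairs_c3sq_comp_snd_le hβ (b ∘ Prod.map ![i₁, i₂] id)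
    _ = ((Fintype.card γ : ℝ) - 1) * ((Fintype.card β : ℝ) - 1) *
          ∑ i₁, ∑ i₂ with i₁ < i₂, c3sq (b ∘ Prod.map ![i₁, i₂] id) := by
        simp only [mul_sum, mul_assoc]
    _ ≤ ((Fintype.card γ : ℝ) - 1) * ((Fintype.card β : ℝ) - 1) *
          (((Fintype.card α : ℝ) - 1) * c3sq b) := by
        gcongr
        exact sum_pairs_c3sq_comp_fst_le hα b
    _ = _ := by ring

theorem sum_ite_lt_and_eq_sum_filter [LinearOrder α] [LinearOrder β] [LinearOrder γ]
    (G : α → α → β → β → γ → γ → ℝ) :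
    ∑ i₁, ∑ i₂, ∑ j₁, ∑ j₂, ∑ k₁, ∑ k₂,
        (if i₁ < i₂ ∧ j₁ < j₂ ∧ k₁ < k₂ then G i₁ i₂ j₁ j₂ k₁ k₂ else 0) =
      ∑ i₁, ∑ i₂ with i₁ < i₂, ∑ j₁, ∑ j₂ with j₁ < j₂, ∑ k₁, ∑ k₂ with k₁ < k₂,
        G i₁ i₂ j₁ j₂ k₁ k₂ := by
  simp only [sum_filter, ite_and, ite_sum_zero]

end Homogeneous

theorem sum_trsq_outer (a : Fin d1 × Fin d2 × Fin d3 → ℂ) :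
    tr1sq (outer a) + tr2sq (outer a) + tr3sq (outer a) + tr12sq (outer a) + tr13sq (outer a) +
        tr23sq (outer a) =
      2 * ∑ i, ∑ p, ∑ j, ∑ q, ∑ k, ∑ t,
        (a (i, j, k) * a (p, q, t) * conj (a (i, j, t) * a (p, q, k)) +
          a (i, j, k) * a (p, q, t) * conj (a (i, q, k) * a (p, j, t)) +
          a (i, j, k) * a (p, q, t) * conj (a (p, j, k) * a (i, q, t))) := by
  -- sorting the summation variables by party brings every trace to the order `i p j q k t`
  simp only [tr1sq, tr2sq, tr3sq, tr12sq, tr13sq, tr23sq, outer, Matrix.of_apply, sum_mul_sum,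
    sum_comm (s := (univ : Finset (Fin d2))) (t := (univ : Finset (Fin d1))),
    sum_comm (s := (univ : Finset (Fin d3))) (t := (univ : Finset (Fin d1))),
    sum_comm (s := (univ : Finset (Fin d3))) (t := (univ : Finset (Fin d2)))]
  simp only [← sum_add_distrib, mul_sum]
  refine sum_congr rfl fun i _ => sum_congr rfl fun p _ => sum_congr rfl fun j _ =>
    sum_congr rfl fun q _ => sum_congr rfl fun k _ => sum_congr rfl fun t _ => ?_
  simp only [map_mul]
  ring

theorem pureC3_sq (a : Fin d1 × Fin d2 × Fin d3 → ℂ) (ha : ∑ x, Complex.normSq (a x) = 1) :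
    pureC3 a ^ 2 = c3sq a := by
  have hX : (2 : ℝ) ^ 3 - 2 - (tr1sq (outer a) + tr2sq (outer a) + tr3sq (outer a) +
      tr12sq (outer a) + tr13sq (outer a) + tr23sq (outer a)).re = 2 * c3sq a := by
    rw [sum_trsq_outer, c3sq, sum_c3sqTerm a ha]
    simp only [Complex.re_ofNat, Complex.im_ofNat, Complex.mul_re, Complex.re_sum, zero_mul,
      sub_zero]
    ring
  have hpow : ((2 : ℝ) ^ ((1 : ℝ) - 3 / 2)) ^ 2 = 1 / 2 := by
    rw [← Real.rpow_natCast, ← Real.rpow_mul zero_le_two]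
    norm_num
  rw [pureC3, mul_pow, hpow, hX, Real.sq_sqrt (by positivity [c3sq_nonneg a])]
  ring

theorem C3sqCoeff_subvec (a : Fin d1 × Fin d2 × Fin d3 → ℂ) (i₁ i₂ : Fin d1) (j₁ j₂ : Fin d2)
    (k₁ k₂ : Fin d3) :
    C3sqCoeff (subvec a i₁ i₂ j₁ j₂ k₁ k₂) =
      c3sq (a ∘ Prod.map ![i₁, i₂] (Prod.map ![j₁, j₂] ![k₁, k₂])) := by
  have h : subvec a i₁ i₂ j₁ j₂ k₁ k₂ = a ∘ Prod.map ![i₁, i₂] (Prod.map ![j₁, j₂] ![k₁, k₂]) := by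
    funext ⟨u, v, w⟩
    fin_cases u <;> fin_cases v <;> fin_cases w <;> rfl
  rw [h]
  rfl

/-- for a unit vector `|φ⟩ = Σ a_{ijk}|ijk⟩` in
`ℂ^{d1}⊗ℂ^{d2}⊗ℂ^{d3}` with `d1, d2, d3 ≥ 2`,
`C₃²(|φ⟩) ≥ (1/((d1−1)(d2−1)(d3−1))) Σ C₃²(|φ⟩_{2⊗2⊗2})`, the sum running over
all choices of index pairs `i₁<i₂`, `j₁<j₂`, `k₁<k₂`. -/
theorem stmt_6 (hd1 : 2 ≤ d1) (hd2 : 2 ≤ d2) (hd3 : 2 ≤ d3)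
    (a : Fin d1 × Fin d2 × Fin d3 → ℂ)
    (ha : ∑ x, Complex.normSq (a x) = 1) :
    (pureC3 a) ^ 2 ≥
      (1 / (((d1 : ℝ) - 1) * ((d2 : ℝ) - 1) * ((d3 : ℝ) - 1))) *
        ∑ i₁, ∑ i₂, ∑ j₁, ∑ j₂, ∑ k₁, ∑ k₂,
          if i₁ < i₂ ∧ j₁ < j₂ ∧ k₁ < k₂ then
            C3sqCoeff (subvec a i₁ i₂ j₁ j₂ k₁ k₂)
          else 0 := by
  have hbound := sum_substates_c3sq_le (by simpa using hd1) (by simpa using hd2)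
    (by simpa using hd3) a
  simp only [Fintype.card_fin] at hbound
  have hD : (0 : ℝ) < ((d1 : ℝ) - 1) * ((d2 : ℝ) - 1) * ((d3 : ℝ) - 1) := by
    have h₁ : (1 : ℝ) < d1 := by exact_mod_cast hd1
    have h₂ : (1 : ℝ) < d2 := by exact_mod_cast hd2
    have h₃ : (1 : ℝ) < d3 := by exact_mod_cast hd3
    exact mul_pos (mul_pos (sub_pos.2 h₁) (sub_pos.2 h₂)) (sub_pos.2 h₃)
  rw [ge_iff_le, pureC3_sq a ha, sum_ite_lt_and_eq_sum_filter]
  simp only [C3sqCoeff_subvec]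
  rw [one_div_mul_eq_div, div_le_iff₀' hD]
  exact hbound

end Stmt6
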